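/- arXiv:1911.00865 — 2 statements merged into one kernel-verified Lean document; each statement's English description precedes it below -/
import Mathlib

section
/- (Proposition 2.) Fix t ≥ 0, ε > 0 and θ ∈ ℝ^p with ‖θ* − θ‖ ≥ ε. Then there exists j ∈ {t+1, …, t+N_u} such that Pr(θ ∉ Δ_j) ≥ p_w(ε·√(β/N_u)). -/
/-!
Persistent excitation gives `β ‖θ* - θ‖² ≤ ∑_{j < N_u} ‖D_{t+j} (θ* - θ)‖²`, so for some `j` the
vector `d = D_{t+j} (θ* - θ)` has `‖d‖ ≥ ε √(β / N_u) =: δ`. A maximizer `w⁰` of `⟪d, ·⟫` on the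
compact set `W` lies on its boundary, and whenever `‖w_{t+j} - w⁰‖ < δ ≤ ‖d‖` the point
`d + w_{t+j}` overshoots that maximum, so it leaves `W`, i.e. `θ ∉ Δ_{t+j+1}`. The tight
disturbance bound gives this event probability at least `p_w(δ)`.
-/

open Matrix MeasureTheory
open scoped RealInnerProductSpace

section InnerMaximizer

variable {E : Type*} [NormedAddCommGroup E] [InnerProductSpace ℝ E]

theorem eq_zero_of_isMaxOn_inner_of_mem_interior {W : Set E} {d w₀ : E}
    (hmax : IsMaxOn (fun x ↦ ⟪d, x⟫) W w₀) (hw₀ : w₀ ∈ interior W) : d = 0 := by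
  have hlocal : IsLocalMax (innerSL ℝ d) w₀ := hmax.isLocalMax (mem_interior_iff_mem_nhds.mp hw₀)
  have hzero : innerSL ℝ d = 0 := by
    simpa only [ContinuousLinearMap.fderiv] using hlocal.fderiv_eq_zero
  simpa using congr($hzero d)

theorem IsCompact.exists_mem_frontier_isMaxOn_inner {W : Set E} (hW : IsCompact W)
    (hWne : W.Nonempty) {d : E} (hd : d ≠ 0) :
    ∃ w₀ ∈ frontier W, IsMaxOn (fun x ↦ ⟪d, x⟫) W w₀ := by
  obtain ⟨w₀, hw₀W, hmax⟩ :=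
    hW.exists_isMaxOn hWne (innerSL ℝ d).continuous.continuousOn
  refine ⟨w₀, ⟨subset_closure hw₀W, fun hint ↦ hd ?_⟩, hmax⟩
  exact eq_zero_of_isMaxOn_inner_of_mem_interior hmax hint

theorem add_notMem_of_isMaxOn_inner {W : Set E} {d w₀ w : E}
    (hmax : IsMaxOn (fun x ↦ ⟪d, x⟫) W w₀) (hw : ‖w - w₀‖ < ‖d‖) : d + w ∉ W := by
  intro hmem
  have hle : ⟪d, d + w⟫ ≤ ⟪d, w₀⟫ := hmax hmem
  have hcs : -(‖d‖ * ‖w - w₀‖) ≤ ⟪d, w - w₀⟫ := neg_le_of_abs_le (abs_real_inner_le_norm d _)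
  have hlt : ‖d‖ * ‖w - w₀‖ < ‖d‖ ^ 2 := by
    rw [sq]; exact mul_lt_mul_of_pos_left hw ((norm_nonneg _).trans_lt hw)
  rw [inner_add_right, real_inner_self_eq_norm_sq] at hle
  rw [inner_sub_right] at hcs
  linarith

end InnerMaximizer

theorem norm_toEuclideanLin_sq {m n : Type*} [Fintype m] [Fintype n] [DecidableEq n]
    (A : Matrix m n ℝ) (v : EuclideanSpace ℝ n) :
    ‖toEuclideanLin A v‖ ^ 2 = v.ofLp ⬝ᵥ ((Aᵀ * A) *ᵥ v.ofLp) := by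
  rw [← mulVec_mulVec, dotProduct_mulVec, vecMul_transpose, ← real_inner_self_eq_norm_sq]
  rfl

theorem sum_norm_toEuclideanLin_sq_ge {ι m n : Type*} [Fintype m] [Fintype n] [DecidableEq n]
    (s : Finset ι) (A : ι → Matrix m n ℝ) (β : ℝ)
    (hPE : ((∑ i ∈ s, (A i)ᵀ * A i) - β • (1 : Matrix n n ℝ)).PosSemidef)
    (v : EuclideanSpace ℝ n) :
    β * ‖v‖ ^ 2 ≤ ∑ i ∈ s, ‖toEuclideanLin (A i) v‖ ^ 2 := by
  have h := hPE.dotProduct_mulVec_nonneg v.ofLp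
  rw [star_trivial, sub_mulVec, dotProduct_sub, sub_nonneg, smul_mulVec, one_mulVec,
    dotProduct_smul, smul_eq_mul, sum_mulVec, dotProduct_sum] at h
  have hv : v.ofLp ⬝ᵥ v.ofLp = ‖v‖ ^ 2 := by rw [← real_inner_self_eq_norm_sq]; rfl
  simpa only [hv, norm_toEuclideanLin_sq] using h

theorem exists_lt_sqrt_mul_norm_le_norm_toEuclideanLin {m n : Type*} [Fintype m] [Fintype n]
    [DecidableEq n] (D : ℕ → Matrix m n ℝ) (β : ℝ) (hβ : 0 ≤ β) (N t : ℕ) (hN : 1 ≤ N)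
    (hPE : ((∑ j ∈ Finset.range N, (D (t + j))ᵀ * D (t + j)) - β • (1 : Matrix n n ℝ)).PosSemidef)
    (v : EuclideanSpace ℝ n) :
    ∃ j < N, Real.sqrt (β / N) * ‖v‖ ≤ ‖toEuclideanLin (D (t + j)) v‖ := by
  have hNpos : (0 : ℝ) < N := by exact_mod_cast hN
  have hsum : ∑ _j ∈ Finset.range N, β / N * ‖v‖ ^ 2
      ≤ ∑ j ∈ Finset.range N, ‖toEuclideanLin (D (t + j)) v‖ ^ 2 := by
    rw [Finset.sum_const, Finset.card_range, nsmul_eq_mul]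
    field_simp
    exact sum_norm_toEuclideanLin_sq_ge _ _ β hPE v
  obtain ⟨j, hj, hle⟩ := Finset.exists_le_of_sum_le (Finset.nonempty_range_iff.mpr (by omega)) hsum
  refine ⟨j, Finset.mem_range.mp hj, ?_⟩
  rw [← Real.sqrt_sq (norm_nonneg (toEuclideanLin _ v)), ← Real.sqrt_sq (norm_nonneg v),
    ← Real.sqrt_mul (div_nonneg hβ hNpos.le)]
  exact Real.sqrt_le_sqrt hle

theorem stmt3_general (n p : ℕ)
    (Ω : Type) [MeasurableSpace Ω] (P : Measure Ω)
    (W : Set (EuclideanSpace ℝ (Fin n))) (hWne : W.Nonempty) (hWcomp : IsCompact W)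
    (w : ℕ → Ω → EuclideanSpace ℝ (Fin n))
    (pw : ℝ → ℝ)
    (hpw : ∀ w0 ∈ frontier W, ∀ ε : ℝ, 0 < ε → ∀ t : ℕ,
      ENNReal.ofReal (pw ε) ≤ P {ω | ‖w t ω - w0‖ < ε})
    (θs : EuclideanSpace ℝ (Fin p)) (D : ℕ → Matrix (Fin n) (Fin p) ℝ)
    (β : ℝ) (hβ : 0 < β) (Nu : ℕ) (hNu : 1 ≤ Nu)
    (hPE : ∀ t : ℕ, Matrix.PosSemidef
      ((∑ j ∈ Finset.range Nu, (D (t + j))ᵀ * D (t + j)) - β • (1 : Matrix (Fin p) (Fin p) ℝ)))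
    (Δ : ℕ → Ω → Set (EuclideanSpace ℝ (Fin p)))
    (hΔ : ∀ t ω, Δ (t + 1) ω = {θ | toEuclideanLin (D t) (θs - θ) + w t ω ∈ W})
    (t : ℕ) (ε : ℝ) (hε : 0 < ε)
    (θ : EuclideanSpace ℝ (Fin p)) (hθ : ε ≤ ‖θs - θ‖) :
    ∃ j ∈ Finset.Icc (t + 1) (t + Nu),
      ENNReal.ofReal (pw (ε * Real.sqrt (β / Nu))) ≤ P {ω | θ ∉ Δ j ω} := by
  obtain ⟨j, hj, hexcited⟩ :=
    exists_lt_sqrt_mul_norm_le_norm_toEuclideanLin D β hβ.le Nu t hNu (hPE t) (θs - θ)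
  set d := toEuclideanLin (D (t + j)) (θs - θ)
  set δ := ε * Real.sqrt (β / Nu)
  have hδ : 0 < δ := mul_pos hε (Real.sqrt_pos.mpr (div_pos hβ (by exact_mod_cast hNu)))
  have hδd : δ ≤ ‖d‖ :=
    calc δ ≤ ‖θs - θ‖ * Real.sqrt (β / Nu) := mul_le_mul_of_nonneg_right hθ (Real.sqrt_nonneg _)
      _ = Real.sqrt (β / Nu) * ‖θs - θ‖ := mul_comm _ _
      _ ≤ ‖d‖ := hexcited
  obtain ⟨w₀, hw₀, hmax⟩ :=
    hWcomp.exists_mem_frontier_isMaxOn_inner hWne (norm_pos_iff.mp (hδ.trans_le hδd))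
  refine ⟨t + j + 1, Finset.mem_Icc.mpr ⟨by omega, by omega⟩,
    (hpw w₀ hw₀ δ hδ (t + j)).trans (measure_mono fun ω hω ↦ ?_)⟩
  show θ ∉ Δ (t + j + 1) ω
  rw [hΔ]
  exact add_notMem_of_isMaxOn_inner hmax (hω.trans_le hδd)

/-- Proposition 2: under tight disturbance bounds and persistence of
excitation, for any `θ` with `‖θ* − θ‖ ≥ ε` there is `j ∈ {t+1,…,t+N_u}` such that
`Pr(θ ∉ Δ_j) ≥ p_w(ε √(β/N_u))`. -/
theorem stmt3 (n p : ℕ) (hn : 1 ≤ n) (hp : 1 ≤ p)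
    (Ω : Type) [MeasurableSpace Ω] (P : Measure Ω) [IsProbabilityMeasure P]
    (W : Set (EuclideanSpace ℝ (Fin n))) (hWne : W.Nonempty) (hWcomp : IsCompact W)
    (hWconv : Convex ℝ W)
    (w : ℕ → Ω → EuclideanSpace ℝ (Fin n)) (hwW : ∀ t ω, w t ω ∈ W)
    (pw : ℝ → ℝ) (hpw01 : ∀ ε : ℝ, 0 < ε → 0 < pw ε ∧ pw ε ≤ 1)
    (hpw : ∀ w0 ∈ frontier W, ∀ ε : ℝ, 0 < ε → ∀ t : ℕ,
      ENNReal.ofReal (pw ε) ≤ P {ω | ‖w t ω - w0‖ < ε})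
    (θs : EuclideanSpace ℝ (Fin p)) (D : ℕ → Matrix (Fin n) (Fin p) ℝ)
    (τ β : ℝ) (hτ : 0 < τ) (hβ : 0 < β) (Nu : ℕ) (hNu : 1 ≤ Nu)
    (hDbdd : ∀ t : ℕ, ∀ v : EuclideanSpace ℝ (Fin p), ‖toEuclideanLin (D t) v‖ ≤ τ * ‖v‖)
    (hPE : ∀ t : ℕ, Matrix.PosSemidef
      ((∑ j ∈ Finset.range Nu, (D (t + j))ᵀ * D (t + j)) - β • (1 : Matrix (Fin p) (Fin p) ℝ)))
    (Δ : ℕ → Ω → Set (EuclideanSpace ℝ (Fin p)))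
    (hΔ : ∀ t ω, Δ (t + 1) ω = {θ | toEuclideanLin (D t) (θs - θ) + w t ω ∈ W})
    (t : ℕ) (ε : ℝ) (hε : 0 < ε)
    (θ : EuclideanSpace ℝ (Fin p)) (hθ : ε ≤ ‖θs - θ‖) :
    ∃ j ∈ Finset.Icc (t + 1) (t + Nu),
      ENNReal.ofReal (pw (ε * Real.sqrt (β / Nu))) ≤ P {ω | θ ∉ Δ j ω} :=
  stmt3_general n p Ω P W hWne hWcomp w pw hpw θs D β hβ Nu hNu hPE Δ hΔ t ε hε θ hθ
end

section
/- Let N_u ≥ 1 and let D_0, …, D_{N_u−1} ∈ ℝ^{n×p} satisfy ‖D_j‖ ≤ τ (operator norm) for all j and S := Σ_{j=0}^{N_u−1} D_jᵀ D_j ⪰ β·I with β > 0. Let m ∈ ℝ^p with ‖m‖ = 1, and define g_j := −D_j S^{−1} m ∈ ℝ^n for each j. Let W ⊆ ℝ^n and for each j let w_j⁰ ∈ W satisfy g_jᵀ(w − w_j⁰) ≤ 0 for all w ∈ W. If θ, θ* ∈ ℝ^p and w_0, …, w_{N_u−1} ∈ ℝ^n satisfy D_j(θ* − θ) + w_j ∈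 W for all j ∈ {0, …, N_u−1}, then mᵀ(θ − θ*) ≤ (N_u·τ/β)·max_{j} ‖w_j − w_j⁰‖. -/
/-!
Put `v = S⁻¹ m` and `x = θ* - θ`. Since `S = Σⱼ Dⱼᵀ Dⱼ`, we get `⟪m, x⟫ = ⟪S v, x⟫ = Σⱼ ⟪Dⱼ v, Dⱼ x⟫`.
As `-Dⱼ v` lies in the normal cone of `W` at `wⱼ⁰`, testing it against `Dⱼ x + wⱼ ∈ W` gives
`-⟪Dⱼ v, Dⱼ x⟫ ≤ ‖Dⱼ v‖ ‖wⱼ - wⱼ⁰‖`. Finally `S ⪰ βI` gives `β ‖v‖ ≤ ‖S v‖ = 1`, so that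
`‖Dⱼ v‖ ≤ τ / β`, and summing over the `N_u` indices yields the bound.
-/

open Matrix
open scoped RealInnerProductSpace

section InnerProductSpace

open LinearMap

variable {E F : Type*} [NormedAddCommGroup E] [InnerProductSpace ℝ E]
  [NormedAddCommGroup F] [InnerProductSpace ℝ F]

lemma LinearMap.IsPositive.mul_norm_le_norm_apply {T : E →ₗ[ℝ] E} {β : ℝ}
    (hT : (T - β • LinearMap.id).IsPositive) (u : E) : β * ‖u‖ ≤ ‖T u‖ := by
  have hcoer : β * ‖u‖ ^ 2 ≤ ⟪u, T u⟫ := by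
    have := hT.inner_nonneg_right u
    rw [sub_apply, smul_apply, id_apply, inner_sub_right, real_inner_smul_right,
      real_inner_self_eq_norm_sq] at this
    linarith
  rcases (norm_nonneg u).eq_or_lt with hu | hu
  · rw [← hu, mul_zero]
    exact norm_nonneg _
  · refine le_of_mul_le_mul_right ?_ hu
    calc β * ‖u‖ * ‖u‖ = β * ‖u‖ ^ 2 := by ring
      _ ≤ ⟪u, T u⟫ := hcoer
      _ ≤ ‖u‖ * ‖T u‖ := real_inner_le_norm _ _
      _ = ‖T u‖ * ‖u‖ := mul_comm _ _

variable [FiniteDimensional ℝ E] [FiniteDimensional ℝ F]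

lemma inner_sum_adjoint_comp_self_apply {ι : Type*} (s : Finset ι) (L : ι → E →ₗ[ℝ] F)
    (v x : E) : ⟪(∑ j ∈ s, adjoint (L j) ∘ₗ L j) v, x⟫ = ∑ j ∈ s, ⟪L j v, L j x⟫ := by
  simp only [LinearMap.coe_sum, Finset.sum_apply, LinearMap.comp_apply, sum_inner,
    adjoint_inner_left]

lemma neg_inner_sum_adjoint_comp_self_le {ι : Type*} (s : Finset ι) (L : ι → E →ₗ[ℝ] F)
    (v x : E) (W : Set F) (w w0 : ι → F) (hcone : ∀ j ∈ s, ∀ y ∈ W, ⟪-L j v, y - w0 j⟫ ≤ 0)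
    (hmem : ∀ j ∈ s, L j x + w j ∈ W) :
    -⟪(∑ j ∈ s, adjoint (L j) ∘ₗ L j) v, x⟫ ≤ ∑ j ∈ s, ‖L j v‖ * ‖w j - w0 j‖ := by
  rw [inner_sum_adjoint_comp_self_apply, ← Finset.sum_neg_distrib]
  refine Finset.sum_le_sum fun j hj => ?_
  have h := hcone j hj _ (hmem j hj)
  rw [add_sub_assoc, inner_neg_left, inner_add_right] at h
  linarith [real_inner_le_norm (L j v) (w j - w0 j)]

end InnerProductSpace

lemma Matrix.toEuclideanLin_transpose {m n : Type*} [Fintype m] [DecidableEq m] [Fintype n]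
    [DecidableEq n] (A : Matrix m n ℝ) :
    toEuclideanLin Aᵀ = LinearMap.adjoint (toEuclideanLin A) := by
  rw [← conjTranspose_eq_transpose_of_trivial, toEuclideanLin_conjTranspose_eq_adjoint]

lemma Matrix.toEuclideanLin_sum_transpose_mul_self {ι m n : Type*} [Fintype m] [DecidableEq m]
    [Fintype n] [DecidableEq n] (s : Finset ι) (D : ι → Matrix m n ℝ) :
    toEuclideanLin (∑ j ∈ s, (D j)ᵀ * D j) =
      ∑ j ∈ s, LinearMap.adjoint (toEuclideanLin (D j)) ∘ₗ toEuclideanLin (D j) := by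
  simp only [map_sum, toLpLin_mul_same, toEuclideanLin_transpose]

lemma Matrix.PosSemidef.isPositive_toEuclideanLin_sub_smul_id {n : Type*} [Fintype n]
    [DecidableEq n] {S : Matrix n n ℝ} {β : ℝ} (h : (S - β • 1).PosSemidef) :
    (toEuclideanLin S - β • LinearMap.id).IsPositive := by
  rw [← isPositive_toEuclideanLin_iff] at h
  simpa using h

lemma Matrix.toEuclideanLin_mul_inv_apply {n : Type*} [Fintype n] [DecidableEq n]
    {S : Matrix n n ℝ} (hS : IsUnit S) (m : EuclideanSpace ℝ n) :
    toEuclideanLin S (toEuclideanLin S⁻¹ m) = m := by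
  rw [← LinearMap.comp_apply, ← toLpLin_mul_same,
    mul_nonsing_inv _ ((isUnit_iff_isUnit_det S).mp hS), toLpLin_one, LinearMap.id_apply]

lemma Matrix.PosSemidef.posDef_of_sub_smul_one {n : Type*} [Fintype n] [DecidableEq n]
    {S : Matrix n n ℝ} {β : ℝ} (h : (S - β • 1).PosSemidef) (hβ : 0 < β) : S.PosDef := by
  simpa using PosDef.posSemidef_add h (PosDef.one.smul hβ)

/-- the key deterministic bound behind Theorem 3. If `S = Σⱼ Dⱼᵀ Dⱼ ⪰ βI`,
`‖Dⱼ‖ ≤ τ`, `‖m‖ = 1`, `gⱼ = −Dⱼ S⁻¹ m` lies in the normal cone to `W` at `wⱼ⁰`, and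
`Dⱼ(θ* − θ) + wⱼ ∈ W` for all `j < N_u`, then
`mᵀ(θ − θ*) ≤ (N_u τ/β)·maxⱼ ‖wⱼ − wⱼ⁰‖`. -/
theorem stmt6 (n p : ℕ) (Nu : ℕ) (hNu : 1 ≤ Nu)
    (D : ℕ → Matrix (Fin n) (Fin p) ℝ) (τ β : ℝ) (hβ : 0 < β)
    (hDbdd : ∀ j < Nu, ∀ v : EuclideanSpace ℝ (Fin p), ‖toEuclideanLin (D j) v‖ ≤ τ * ‖v‖)
    (S : Matrix (Fin p) (Fin p) ℝ) (hS : S = ∑ j ∈ Finset.range Nu, (D j)ᵀ * D j)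
    (hSβ : Matrix.PosSemidef (S - β • (1 : Matrix (Fin p) (Fin p) ℝ)))
    (m : EuclideanSpace ℝ (Fin p)) (hm : ‖m‖ = 1)
    (g : ℕ → EuclideanSpace ℝ (Fin n))
    (hg : ∀ j < Nu, g j = -(toEuclideanLin (D j) (toEuclideanLin S⁻¹ m)))
    (W : Set (EuclideanSpace ℝ (Fin n))) (w0 : ℕ → EuclideanSpace ℝ (Fin n))
    (hcone : ∀ j < Nu, ∀ w ∈ W, ⟪g j, w - w0 j⟫ ≤ 0)
    (θ θs : EuclideanSpace ℝ (Fin p)) (w : ℕ → EuclideanSpace ℝ (Fin n))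
    (hmem : ∀ j < Nu, toEuclideanLin (D j) (θs - θ) + w j ∈ W) :
    ⟪m, θ - θs⟫ ≤ (↑Nu * τ / β) *
      (Finset.range Nu).sup' (Finset.nonempty_range_iff.mpr (by omega))
        (fun j => ‖w j - w0 j‖) := by
  set v := toEuclideanLin S⁻¹ m
  have hSv : toEuclideanLin S v = m :=
    toEuclideanLin_mul_inv_apply (hSβ.posDef_of_sub_smul_one hβ).isUnit m
  have hv : β * ‖v‖ ≤ 1 := by
    simpa [hSv, hm] using hSβ.isPositive_toEuclideanLin_sub_smul_id.mul_norm_le_norm_apply v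
  have hτ : 0 ≤ τ := by simpa [hm] using (norm_nonneg _).trans (hDbdd 0 hNu m)
  have hDv : ∀ j < Nu, ‖toEuclideanLin (D j) v‖ ≤ τ / β := fun j hj =>
    calc ‖toEuclideanLin (D j) v‖ ≤ τ * ‖v‖ := hDbdd j hj v
      _ ≤ τ / β := by rw [le_div_iff₀ hβ]; nlinarith
  have hsum := neg_inner_sum_adjoint_comp_self_le (Finset.range Nu)
    (fun j => toEuclideanLin (D j)) v (θs - θ) W w w0
    (fun j hj => hg j (Finset.mem_range.mp hj) ▸ hcone j (Finset.mem_range.mp hj))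
    (fun j hj => hmem j (Finset.mem_range.mp hj))
  rw [← toEuclideanLin_sum_transpose_mul_self, ← hS, hSv] at hsum
  set M := (Finset.range Nu).sup' (Finset.nonempty_range_iff.mpr (by omega))
    (fun j => ‖w j - w0 j‖)
  calc ⟪m, θ - θs⟫ = -⟪m, θs - θ⟫ := by rw [← inner_neg_right, neg_sub]
    _ ≤ ∑ j ∈ Finset.range Nu, ‖toEuclideanLin (D j) v‖ * ‖w j - w0 j‖ := hsum
    _ ≤ (Finset.range Nu).card • (τ / β * M) :=
      Finset.sum_le_card_nsmul _ _ _ fun j hj => mul_le_mul (hDv j (Finset.mem_range.mp hj))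
        (Finset.le_sup' (fun j => ‖w j - w0 j‖) hj) (norm_nonneg _) (by positivity)
    _ = Nu * τ / β * M := by rw [Finset.card_range, nsmul_eq_mul]; ring
end
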